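/- arXiv:1902.06773 — 12 statements merged into one kernel-verified Lean document; each statement's English description precedes it below -/
import Mathlib

section
/- Let h > 0, ν > 0, let k be a nonzero integer, and let s ∈ ℂ with s ≠ 0. Let ξ be a positive real satisfying (4/h²)·sinh²(ξh/2) = k², and let γ ∈ ℂ satisfy Re(γ) > 0 and (4/h²)·sinh²(γh/2) = s/ν + k². Let C_p ∈ ℂ, and define sequences U, V, P : ℕ → ℂ by U_j = −(i k C_p/s)·(exp(−ξ j h) − exp(−γ j h)), V_j = (sinh(ξh)·C_p/(h s))·(exp(−ξ j h) − exp(−γ j h)), and P_j = C_p·exp(−ξ j h). Then U_0 = V_0 = 0, and for every j ≥ 1: s·U_j = −i k·P_j − ν k²·U_j + ν·D₊D₋U_j; s·V_j = −D₀P_j − ν k²·V_j + ν·D₊D₋V_j; and −k²·P_j + D₊D₋P_j = 0. -/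
/-!
A geometric grid function `j ↦ exp (-z j h)` is an eigenfunction of `D₊D₋` with eigenvalue
`(4 / h²) sinh² (z h / 2)` and of `D₀` with eigenvalue `-sinh (z h) / h`. The dispersion relations
for `ξ` and `γ` thus turn `D₊D₋` into multiplication by `k²` on `exp (-ξ j h)` and by `s / ν + k²`
on `exp (-γ j h)`. On `a (exp (-ξ j h) - exp (-γ j h))` the viscous terms then leave exactly
`s a exp (-ξ j h)`, which the choice of the amplitudes matches with the pressure gradient, while
both differences vanish at `j = 0`.
-/

open Complex

namespace StokesGrid

/-- Only meaningful for `1 ≤ j`: at `j = 0` the truncated index `j - 1` is `0`. -/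
noncomputable def secondDiff (h : ℂ) (f : ℕ → ℂ) (j : ℕ) : ℂ :=
  (f (j + 1) - 2 * f j + f (j - 1)) / h ^ 2

noncomputable def centralDiff (h : ℂ) (f : ℕ → ℂ) (j : ℕ) : ℂ :=
  (f (j + 1) - f (j - 1)) / (2 * h)

noncomputable def expSeq (z h : ℂ) (j : ℕ) : ℂ :=
  exp (-z * j * h)

variable {h : ℂ} {j : ℕ}

theorem secondDiff_const_mul (c : ℂ) (f : ℕ → ℂ) :
    secondDiff h (fun i => c * f i) j = c * secondDiff h f j := by
  unfold secondDiff; ring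

theorem secondDiff_sub (f g : ℕ → ℂ) :
    secondDiff h (fun i => f i - g i) j = secondDiff h f j - secondDiff h g j := by
  unfold secondDiff; ring

theorem centralDiff_const_mul (c : ℂ) (f : ℕ → ℂ) :
    centralDiff h (fun i => c * f i) j = c * centralDiff h f j := by
  unfold centralDiff; ring

theorem exp_sub_two_add_exp_neg (z : ℂ) : exp z - 2 + exp (-z) = 4 * sinh (z / 2) ^ 2 := by
  calc exp z - 2 + exp (-z) = 2 * cosh (2 * (z / 2)) - 2 := by
        rw [mul_div_cancel₀ z two_ne_zero, two_cosh]; ring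
    _ = 4 * sinh (z / 2) ^ 2 := by rw [cosh_two_mul, cosh_sq]; ring

theorem expSeq_zero (z h : ℂ) : expSeq z h 0 = 1 := by
  simp [expSeq]

theorem expSeq_succ (z h : ℂ) (j : ℕ) : expSeq z h (j + 1) = expSeq z h j * exp (-(z * h)) := by
  rw [expSeq, expSeq, ← exp_add]; push_cast; ring_nf

theorem expSeq_pred (z h : ℂ) (hj : 1 ≤ j) : expSeq z h (j - 1) = expSeq z h j * exp (z * h) := by
  rw [expSeq, expSeq, ← exp_add, Nat.cast_sub hj, Nat.cast_one]; ring_nf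

theorem secondDiff_expSeq (z : ℂ) (hj : 1 ≤ j) :
    secondDiff h (expSeq z h) j = 4 / h ^ 2 * sinh (z * h / 2) ^ 2 * expSeq z h j := by
  have hsinh := exp_sub_two_add_exp_neg (z * h)
  rw [secondDiff, expSeq_succ, expSeq_pred z h hj]
  linear_combination expSeq z h j / h ^ 2 * hsinh

theorem centralDiff_expSeq (z : ℂ) (hj : 1 ≤ j) :
    centralDiff h (expSeq z h) j = -(sinh (z * h) / h) * expSeq z h j := by
  have hsinh := two_sinh (z * h)
  rw [centralDiff, expSeq_succ, expSeq_pred z h hj]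
  linear_combination expSeq z h j / (2 * h) * hsinh

theorem momentum_of_eigen {E F : ℕ → ℂ} {s ν κ : ℂ} (hν : ν ≠ 0)
    (hE : secondDiff h E j = κ ^ 2 * E j) (hF : secondDiff h F j = (s / ν + κ ^ 2) * F j)
    (a : ℂ) :
    s * (a * (E j - F j)) = s * a * E j - ν * κ ^ 2 * (a * (E j - F j))
      + ν * secondDiff h (fun i => a * (E i - F i)) j := by
  rw [secondDiff_const_mul, secondDiff_sub, hE, hF]
  field_simp
  ring

end StokesGrid

open StokesGrid

theorem stmt_1_general (h ν : ℝ) (hh : 0 < h) (hν : 0 < ν)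
    (k : ℤ) (s : ℂ) (hs : s ≠ 0)
    (ξ : ℝ)
    (hξ : (4 / h ^ 2) * (Real.sinh (ξ * h / 2)) ^ 2 = (k : ℝ) ^ 2)
    (γ : ℂ)
    (hγ : (4 / (h : ℂ) ^ 2) * (Complex.sinh (γ * (h : ℂ) / 2)) ^ 2 = s / (ν : ℂ) + (k : ℂ) ^ 2)
    (Cp : ℂ) (U V P : ℕ → ℂ)
    (hU : ∀ j : ℕ, U j = -(Complex.I * (k : ℂ) * Cp / s) *
      (Complex.exp (-(ξ : ℂ) * (j : ℂ) * (h : ℂ)) - Complex.exp (-γ * (j : ℂ) * (h : ℂ))))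
    (hV : ∀ j : ℕ, V j = ((Real.sinh (ξ * h) : ℂ) * Cp / ((h : ℂ) * s)) *
      (Complex.exp (-(ξ : ℂ) * (j : ℂ) * (h : ℂ)) - Complex.exp (-γ * (j : ℂ) * (h : ℂ))))
    (hP : ∀ j : ℕ, P j = Cp * Complex.exp (-(ξ : ℂ) * (j : ℂ) * (h : ℂ))) :
    U 0 = 0 ∧ V 0 = 0 ∧
    ∀ j : ℕ, 1 ≤ j →
      (s * U j = -Complex.I * (k : ℂ) * P j - (ν : ℂ) * (k : ℂ) ^ 2 * U j
          + (ν : ℂ) * ((U (j + 1) - 2 * U j + U (j - 1)) / (h : ℂ) ^ 2)) ∧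
      (s * V j = -((P (j + 1) - P (j - 1)) / (2 * (h : ℂ))) - (ν : ℂ) * (k : ℂ) ^ 2 * V j
          + (ν : ℂ) * ((V (j + 1) - 2 * V j + V (j - 1)) / (h : ℂ) ^ 2)) ∧
      (-(k : ℂ) ^ 2 * P j + (P (j + 1) - 2 * P j + P (j - 1)) / (h : ℂ) ^ 2 = 0) := by
  have hh0 : (h : ℂ) ≠ 0 := by exact_mod_cast hh.ne'
  have hν0 : (ν : ℂ) ≠ 0 := by exact_mod_cast hν.ne'
  have hU' : U = fun j => -(I * k * Cp / s) * (expSeq ξ h j - expSeq γ h j) := funext hU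
  have hV' : V = fun j => (Real.sinh (ξ * h) * Cp / (h * s)) * (expSeq ξ h j - expSeq γ h j) :=
    funext hV
  have hP' : P = fun j => Cp * expSeq ξ h j := funext hP
  refine ⟨by simp [hU', expSeq_zero], by simp [hV', expSeq_zero], fun j hj => ?_⟩
  have hξ' : 4 / (h : ℂ) ^ 2 * sinh (ξ * h / 2) ^ 2 = (k : ℂ) ^ 2 := by exact_mod_cast hξ
  have hE : secondDiff h (expSeq ξ h) j = (k : ℂ) ^ 2 * expSeq ξ h j := by
    rw [secondDiff_expSeq _ hj, hξ']
  have hF : secondDiff h (expSeq γ h) j = (s / ν + (k : ℂ) ^ 2) * expSeq γ h j := by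
    rw [secondDiff_expSeq _ hj, hγ]
  refine ⟨?_, ?_, ?_⟩
  · change s * U j = _ + ν * secondDiff h U j
    rw [hU', momentum_of_eigen hν0 hE hF, hP']
    field_simp
  · change s * V j = -centralDiff h P j - _ + ν * secondDiff h V j
    rw [hV', momentum_of_eigen hν0 hE hF, hP', centralDiff_const_mul, centralDiff_expSeq _ hj,
      ofReal_sinh]
    push_cast
    field_simp
  · change _ + secondDiff h P j = 0
    rw [hP', secondDiff_const_mul, hE]
    ring

/-- The explicit sequences solve the semi-discrete Fourier-transformed Stokes
eigenvalue equations (with α = 0) and the no-slip boundary conditions. -/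
theorem stmt_1 (h ν : ℝ) (hh : 0 < h) (hν : 0 < ν)
    (k : ℤ) (hk : k ≠ 0) (s : ℂ) (hs : s ≠ 0)
    (ξ : ℝ) (hξpos : 0 < ξ)
    (hξ : (4 / h ^ 2) * (Real.sinh (ξ * h / 2)) ^ 2 = (k : ℝ) ^ 2)
    (γ : ℂ) (hγre : 0 < γ.re)
    (hγ : (4 / (h : ℂ) ^ 2) * (Complex.sinh (γ * (h : ℂ) / 2)) ^ 2 = s / (ν : ℂ) + (k : ℂ) ^ 2)
    (Cp : ℂ) (U V P : ℕ → ℂ)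
    (hU : ∀ j : ℕ, U j = -(Complex.I * (k : ℂ) * Cp / s) *
      (Complex.exp (-(ξ : ℂ) * (j : ℂ) * (h : ℂ)) - Complex.exp (-γ * (j : ℂ) * (h : ℂ))))
    (hV : ∀ j : ℕ, V j = ((Real.sinh (ξ * h) : ℂ) * Cp / ((h : ℂ) * s)) *
      (Complex.exp (-(ξ : ℂ) * (j : ℂ) * (h : ℂ)) - Complex.exp (-γ * (j : ℂ) * (h : ℂ))))
    (hP : ∀ j : ℕ, P j = Cp * Complex.exp (-(ξ : ℂ) * (j : ℂ) * (h : ℂ))) :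
    U 0 = 0 ∧ V 0 = 0 ∧
    ∀ j : ℕ, 1 ≤ j →
      (s * U j = -Complex.I * (k : ℂ) * P j - (ν : ℂ) * (k : ℂ) ^ 2 * U j
          + (ν : ℂ) * ((U (j + 1) - 2 * U j + U (j - 1)) / (h : ℂ) ^ 2)) ∧
      (s * V j = -((P (j + 1) - P (j - 1)) / (2 * (h : ℂ))) - (ν : ℂ) * (k : ℂ) ^ 2 * V j
          + (ν : ℂ) * ((V (j + 1) - 2 * V j + V (j - 1)) / (h : ℂ) ^ 2)) ∧
      (-(k : ℂ) ^ 2 * P j + (P (j + 1) - 2 * P j + P (j - 1)) / (h : ℂ) ^ 2 = 0) :=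
  stmt_1_general h ν hh hν k s hs ξ hξ γ hγ Cp U V P hU hV hP
end

section
/- Let h > 0, ν > 0, let k be a nonzero integer, and let s ∈ ℂ with s ≠ 0. Let ξ be a positive real satisfying (4/h²)·sinh²(ξh/2) = k², and let γ ∈ ℂ satisfy Re(γ) > 0 and (4/h²)·sinh²(γh/2) = s/ν + k². Let C_p ∈ ℂ, and define U_j = −(i k C_p/s)·(exp(−ξ j h) − exp(−γ j h)) and P_j = C_p·exp(−ξ j h). Then D₊P_0 + ν i k·D₊U_0 = (C_p/h)·[(exp(−ξh) − 1) + (ν k²/s)·(exp(−ξh) − exp(−γh))]. In particular, the discrete pressure boundary condition D₊P_0 + ν i k·D₊U_0 = 0 holds if and only if C_p·[(exp(−ξh) − 1) + (ν k²/s)·(exp(−ξh) − exp(−γh))] = 0. -/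
open Complex

section ForwardDifference

variable (a h : ℂ)

lemma sub_eq_of_eq_mul_exp (Cp : ℂ) (P : ℕ → ℂ) (hP : ∀ j : ℕ, P j = Cp * exp (-a * j * h)) :
    P 1 - P 0 = Cp * (exp (-a * h) - 1) := by
  simp [hP, mul_sub]

lemma sub_eq_of_eq_mul_exp_sub_exp (b c : ℂ) (U : ℕ → ℂ)
    (hU : ∀ j : ℕ, U j = c * (exp (-a * j * h) - exp (-b * j * h))) :
    U 1 - U 0 = c * (exp (-a * h) - exp (-b * h)) := by
  simp [hU]

end ForwardDifference

-- The factor `ν i k · (-(i k C_p / s))` collapses to `ν k² C_p / s` since `i² = -1`.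
lemma pressure_bc_eq (h ν k s a b Cp : ℂ) (U P : ℕ → ℂ)
    (hU : ∀ j : ℕ, U j = -(I * k * Cp / s) * (exp (-a * j * h) - exp (-b * j * h)))
    (hP : ∀ j : ℕ, P j = Cp * exp (-a * j * h)) :
    (P 1 - P 0) / h + ν * I * k * ((U 1 - U 0) / h)
      = Cp / h * ((exp (-a * h) - 1) + ν * k ^ 2 / s * (exp (-a * h) - exp (-b * h))) := by
  rw [sub_eq_of_eq_mul_exp a h Cp P hP, sub_eq_of_eq_mul_exp_sub_exp a h b _ U hU]
  linear_combination (-(ν * k ^ 2 * Cp / (s * h)) * (exp (-a * h) - exp (-b * h))) * I_sq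

theorem stmt_2_general (h ν : ℝ) (hh : 0 < h)
    (k : ℤ) (s : ℂ)
    (ξ : ℝ)
    (γ : ℂ)
    (Cp : ℂ) (U P : ℕ → ℂ)
    (hU : ∀ j : ℕ, U j = -(Complex.I * (k : ℂ) * Cp / s) *
      (Complex.exp (-(ξ : ℂ) * (j : ℂ) * (h : ℂ)) - Complex.exp (-γ * (j : ℂ) * (h : ℂ))))
    (hP : ∀ j : ℕ, P j = Cp * Complex.exp (-(ξ : ℂ) * (j : ℂ) * (h : ℂ))) :
    ((P 1 - P 0) / (h : ℂ) + (ν : ℂ) * Complex.I * (k : ℂ) * ((U 1 - U 0) / (h : ℂ))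
        = (Cp / (h : ℂ)) * ((Complex.exp (-(ξ : ℂ) * (h : ℂ)) - 1)
          + ((ν : ℂ) * (k : ℂ) ^ 2 / s)
            * (Complex.exp (-(ξ : ℂ) * (h : ℂ)) - Complex.exp (-γ * (h : ℂ))))) ∧
    ((P 1 - P 0) / (h : ℂ) + (ν : ℂ) * Complex.I * (k : ℂ) * ((U 1 - U 0) / (h : ℂ)) = 0 ↔
      Cp * ((Complex.exp (-(ξ : ℂ) * (h : ℂ)) - 1)
        + ((ν : ℂ) * (k : ℂ) ^ 2 / s)
          * (Complex.exp (-(ξ : ℂ) * (h : ℂ)) - Complex.exp (-γ * (h : ℂ)))) = 0) := by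
  have hbc := pressure_bc_eq h ν k s ξ γ Cp U P hU hP
  have hh' : (h : ℂ) ≠ 0 := ofReal_ne_zero.mpr hh.ne'
  refine ⟨hbc, ?_⟩
  rw [hbc, div_mul_eq_mul_div, div_eq_zero_iff, or_iff_left hh']

/-- The discrete curl-curl pressure boundary condition reduces to the coefficient
equation `C_p · q(s) = 0`. -/
theorem stmt_2 (h ν : ℝ) (hh : 0 < h) (hν : 0 < ν)
    (k : ℤ) (hk : k ≠ 0) (s : ℂ) (hs : s ≠ 0)
    (ξ : ℝ) (hξpos : 0 < ξ)
    (hξ : (4 / h ^ 2) * (Real.sinh (ξ * h / 2)) ^ 2 = (k : ℝ) ^ 2)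
    (γ : ℂ) (hγre : 0 < γ.re)
    (hγ : (4 / (h : ℂ) ^ 2) * (Complex.sinh (γ * (h : ℂ) / 2)) ^ 2 = s / (ν : ℂ) + (k : ℂ) ^ 2)
    (Cp : ℂ) (U P : ℕ → ℂ)
    (hU : ∀ j : ℕ, U j = -(Complex.I * (k : ℂ) * Cp / s) *
      (Complex.exp (-(ξ : ℂ) * (j : ℂ) * (h : ℂ)) - Complex.exp (-γ * (j : ℂ) * (h : ℂ))))
    (hP : ∀ j : ℕ, P j = Cp * Complex.exp (-(ξ : ℂ) * (j : ℂ) * (h : ℂ))) :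
    ((P 1 - P 0) / (h : ℂ) + (ν : ℂ) * Complex.I * (k : ℂ) * ((U 1 - U 0) / (h : ℂ))
        = (Cp / (h : ℂ)) * ((Complex.exp (-(ξ : ℂ) * (h : ℂ)) - 1)
          + ((ν : ℂ) * (k : ℂ) ^ 2 / s)
            * (Complex.exp (-(ξ : ℂ) * (h : ℂ)) - Complex.exp (-γ * (h : ℂ))))) ∧
    ((P 1 - P 0) / (h : ℂ) + (ν : ℂ) * Complex.I * (k : ℂ) * ((U 1 - U 0) / (h : ℂ)) = 0 ↔
      Cp * ((Complex.exp (-(ξ : ℂ) * (h : ℂ)) - 1)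
        + ((ν : ℂ) * (k : ℂ) ^ 2 / s)
          * (Complex.exp (-(ξ : ℂ) * (h : ℂ)) - Complex.exp (-γ * (h : ℂ)))) = 0) :=
  stmt_2_general h ν hh k s ξ γ Cp U P hU hP
end

section
/- Let h > 0, ν > 0, let k be a nonzero integer, and let s ∈ ℂ with Re(s) > 0. Let ξ be a positive real satisfying (4/h²)·sinh²(ξh/2) = k², and let γ ∈ ℂ satisfy Re(γ) > 0 and (4/h²)·sinh²(γh/2) = s/ν + k². Define q₁(s) = (exp(−ξh) − exp(−γh))/s. If q₁(s) is real (i.e., its imaginary part is zero), then s is real. -/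
open Complex

/-
Write `a = exp(-ξh)` and `w = exp(-γh)`. The dispersion relations say `a + a⁻¹ = 2 + h²k²` and
`w + w⁻¹ = 2 + h²(s/ν + k²)`, so `(w + w⁻¹) - (a + a⁻¹) = (h²/ν) s`. If `q₁(s) = r` is real then
`w - a = -r s`, and the factorisation `(w + w⁻¹) - (a + a⁻¹) = (w - a)(1 - (a w)⁻¹)` gives, after
cancelling `s`, `r (1 - (a w)⁻¹) = -h²/ν`. Hence `a w` is real, so `w` is real, and then so is
`s = (a - w)/r`.
-/

lemma Complex.exp_add_exp_neg_eq_two_add_sinh_sq (z : ℂ) :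
    exp z + exp (-z) = 2 + 4 * sinh (z / 2) ^ 2 := by
  have hcosh : cosh z = 1 + 2 * sinh (z / 2) ^ 2 := by
    rw [show z = 2 * (z / 2) by ring, cosh_two_mul, cosh_sq]
    ring_nf
  rw [← two_cosh, hcosh]
  ring

lemma Complex.exp_neg_mul_add_inv_of_sinh_sq {h z μ : ℂ} (hh : h ≠ 0)
    (hz : 4 / h ^ 2 * sinh (z * h / 2) ^ 2 = μ) :
    exp (-(z * h)) + (exp (-(z * h)))⁻¹ = 2 + h ^ 2 * μ := by
  rw [← exp_neg, neg_neg, add_comm, exp_add_exp_neg_eq_two_add_sinh_sq, ← hz]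
  field_simp

lemma add_inv_sub_add_inv {K : Type*} [Field K] {a w : K} (ha : a ≠ 0) (hw : w ≠ 0) :
    (w + w⁻¹) - (a + a⁻¹) = (w - a) * (1 - (a * w)⁻¹) := by
  field_simp
  ring

lemma Complex.im_eq_zero_of_add_inv_eq {a r c : ℝ} {w s : ℂ} (ha : a ≠ 0) (hc : c ≠ 0)
    (hs : s ≠ 0) (hw : w ≠ 0) (hwr : w = a - r * s)
    (hsum : w + w⁻¹ = a + (a : ℂ)⁻¹ + c * s) :
    s.im = 0 := by
  have ha' : (a : ℂ) ≠ 0 := ofReal_ne_zero.mpr ha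
  have hrel : (r : ℂ) * (1 - ((a : ℂ) * w)⁻¹) = -c := by
    have hfac := add_inv_sub_add_inv ha' hw
    refine mul_left_cancel₀ hs ?_
    linear_combination hfac - hsum + (1 - ((a : ℂ) * w)⁻¹) * hwr
  have hr : r ≠ 0 := by
    rintro rfl
    exact hc (by simpa using hrel.symm)
  have hrc : (r : ℂ) + c ≠ 0 := by
    intro h0
    have : (r : ℂ) * ((a : ℂ) * w)⁻¹ = 0 := by linear_combination h0 - hrel
    exact mul_ne_zero (ofReal_ne_zero.mpr hr) (inv_ne_zero (mul_ne_zero ha' hw)) this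
  have haw : (a : ℂ) * w = ((r / (r + c) : ℝ) : ℂ) := by
    have hinv : (a : ℂ) * w * ((a : ℂ) * w)⁻¹ = 1 := mul_inv_cancel₀ (mul_ne_zero ha' hw)
    push_cast
    rw [eq_div_iff hrc]
    linear_combination ((a : ℂ) * w) * hrel + (r : ℂ) * hinv
  have hw_im : w.im = 0 := by
    have := congrArg im haw
    simp only [ofReal_im, im_ofReal_mul] at this
    exact (mul_eq_zero.mp this).resolve_left ha
  have := congrArg im hwr
  simp only [sub_im, ofReal_im, im_ofReal_mul, hw_im] at this
  exact (mul_eq_zero.mp (by linarith)).resolve_left hr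

theorem stmt_3_general (h ν : ℝ) (hh : 0 < h) (hν : 0 < ν)
    (k : ℤ) (s : ℂ) (hs : 0 < s.re)
    (ξ : ℝ)
    (hξ : (4 / h ^ 2) * (Real.sinh (ξ * h / 2)) ^ 2 = (k : ℝ) ^ 2)
    (γ : ℂ)
    (hγ : (4 / (h : ℂ) ^ 2) * (Complex.sinh (γ * (h : ℂ) / 2)) ^ 2 = s / (ν : ℂ) + (k : ℂ) ^ 2)
    (hq : (((Complex.exp (-(ξ : ℂ) * (h : ℂ)) - Complex.exp (-γ * (h : ℂ))) / s)).im = 0) :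
    s.im = 0 := by
  have hh' : (h : ℂ) ≠ 0 := ofReal_ne_zero.mpr hh.ne'
  have hs' : s ≠ 0 := fun e => by simp [e] at hs
  set a : ℝ := Real.exp (-(ξ * h))
  have ha : (a : ℂ) = exp (-((ξ : ℂ) * h)) := by simp [a]
  have hsum_a := exp_neg_mul_add_inv_of_sinh_sq (z := (ξ : ℂ)) (μ := (k : ℂ) ^ 2) hh'
    (by exact_mod_cast congrArg ((↑) : ℝ → ℂ) hξ)
  have hsum_w := exp_neg_mul_add_inv_of_sinh_sq hh' hγ
  set q := (exp (-(ξ : ℂ) * h) - exp (-γ * h)) / s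
  have hqr : q = (q.re : ℂ) := ext rfl (by simpa using hq)
  refine im_eq_zero_of_add_inv_eq (a := a) (r := q.re) (c := h ^ 2 / ν) (w := exp (-(γ * h)))
    (Real.exp_pos _).ne' (by positivity) hs' (exp_ne_zero _) ?_ ?_
  · rw [ha, ← hqr]
    simp only [q, neg_mul]
    field_simp
    ring
  · rw [hsum_w, ha, hsum_a]
    push_cast
    field_simp
    ring

/-- If `q₁(s) = (exp(−ξh) − exp(−γh))/s` is real, then `s` is real. -/
theorem stmt_3 (h ν : ℝ) (hh : 0 < h) (hν : 0 < ν)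
    (k : ℤ) (hk : k ≠ 0) (s : ℂ) (hs : 0 < s.re)
    (ξ : ℝ) (hξpos : 0 < ξ)
    (hξ : (4 / h ^ 2) * (Real.sinh (ξ * h / 2)) ^ 2 = (k : ℝ) ^ 2)
    (γ : ℂ) (hγre : 0 < γ.re)
    (hγ : (4 / (h : ℂ) ^ 2) * (Complex.sinh (γ * (h : ℂ) / 2)) ^ 2 = s / (ν : ℂ) + (k : ℂ) ^ 2)
    (hq : (((Complex.exp (-(ξ : ℂ) * (h : ℂ)) - Complex.exp (-γ * (h : ℂ))) / s)).im = 0) :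
    s.im = 0 :=
  stmt_3_general h ν hh hν k s hs ξ hξ γ hγ hq
end

section
/- Let h > 0, ν > 0, let k be a nonzero integer, and let s ∈ ℂ with Re(s) > 0. Let ξ be a positive real satisfying (4/h²)·sinh²(ξh/2) = k², and let γ ∈ ℂ satisfy Re(γ) > 0 and (4/h²)·sinh²(γh/2) = s/ν + k². Then q(s) := (exp(−ξh) − 1) + ν k²·(exp(−ξh) − exp(−γh))/s ≠ 0. -/
open Complex

/-!
Write `a = exp (-ξh)` and `b = exp (-γh)`; both have modulus `< 1` since `ξ > 0` and `Re γ > 0`.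
Because `4 sinh² (z/2) · e^{-z} = (1 - e^{-z})²`, the two dispersion relations become
`k²h² a = (1 - a)²` and `(s/ν + k²) h² b = (1 - b)²`, and eliminating `k²` and `s` from them gives
`q(s) · s h² a b = ν (a - 1)(1 - b)(a - b)`. No factor on the right vanishes: `a, b ≠ 1`, and
`a = b` would force `s h² a = 0`.
-/

lemma four_mul_sinh_half_sq_mul_exp_neg (z : ℂ) :
    4 * sinh (z / 2) ^ 2 * exp (-z) = (1 - exp (-z)) ^ 2 := by
  have hz : exp (-z) = exp (-(z / 2)) ^ 2 := by rw [← exp_nat_mul]; ring_nf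
  have hunit : exp (z / 2) * exp (-(z / 2)) = 1 := by rw [← exp_add]; simp
  rw [sinh, hz]
  linear_combination (exp (z / 2) * exp (-(z / 2)) + 1 - 2 * exp (-(z / 2)) ^ 2) * hunit

lemma sq_one_sub_exp_neg_mul {z h w : ℂ} (hh : h ≠ 0)
    (hw : 4 / h ^ 2 * sinh (z * h / 2) ^ 2 = w) :
    (1 - exp (-z * h)) ^ 2 = w * h ^ 2 * exp (-z * h) := by
  rw [neg_mul, ← four_mul_sinh_half_sq_mul_exp_neg, ← hw]
  field_simp

lemma exp_neg_ne_one_of_re_pos {z : ℂ} (hz : 0 < z.re) : exp (-z) ≠ 1 := by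
  intro h1
  have hnorm : ‖exp (-z)‖ < 1 := by
    rw [norm_exp, neg_re]
    exact Real.exp_lt_one_iff.mpr (neg_neg_of_pos hz)
  simp [h1] at hnorm

section Algebra

variable {F : Type*} [Field F]

lemma sub_one_mul_add_mul_sub_mul_eq {a b s ν m c : F} (hν : ν ≠ 0)
    (ha : (1 - a) ^ 2 = m * c * a) (hb : (1 - b) ^ 2 = (s / ν + m) * c * b) :
    ((a - 1) * s + ν * m * (a - b)) * (c * a * b) = ν * (a - 1) * (1 - b) * (a - b) := by
  have hb' : ν * (1 - b) ^ 2 = (s + ν * m) * c * b := by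
    rw [hb]; field_simp
  linear_combination -(a - 1) * a * hb' - ν * b * (1 - b) * ha

lemma sub_one_add_mul_sub_div_ne_zero {a b s ν m c : F} (hν : ν ≠ 0) (hc : c ≠ 0)
    (hs : s ≠ 0) (ha₀ : a ≠ 0) (ha₁ : a ≠ 1) (hb₁ : b ≠ 1)
    (ha : (1 - a) ^ 2 = m * c * a) (hb : (1 - b) ^ 2 = (s / ν + m) * c * b) :
    (a - 1) + ν * m * ((a - b) / s) ≠ 0 := by
  have hab : a - b ≠ 0 := by
    intro hab
    rw [← sub_eq_zero.mp hab, ha] at hb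
    have : s / ν * c * a = 0 := by linear_combination -hb
    simp [hs, hν, hc, ha₀] at this
  intro hq
  have hlhs : (a - 1) * s + ν * m * (a - b) = 0 := by
    field_simp at hq
    linear_combination hq
  have key := sub_one_mul_add_mul_sub_mul_eq hν ha hb
  rw [hlhs, zero_mul] at key
  exact mul_ne_zero (mul_ne_zero (mul_ne_zero hν (sub_ne_zero.mpr ha₁)) (sub_ne_zero.mpr hb₁.symm))
    hab key.symm

end Algebra

theorem stmt_4_general (h ν : ℝ) (hh : 0 < h) (hν : 0 < ν)
    (k : ℤ) (s : ℂ) (hs : 0 < s.re)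
    (ξ : ℝ) (hξpos : 0 < ξ)
    (hξ : (4 / h ^ 2) * (Real.sinh (ξ * h / 2)) ^ 2 = (k : ℝ) ^ 2)
    (γ : ℂ) (hγre : 0 < γ.re)
    (hγ : (4 / (h : ℂ) ^ 2) * (Complex.sinh (γ * (h : ℂ) / 2)) ^ 2 = s / (ν : ℂ) + (k : ℂ) ^ 2) :
    (Complex.exp (-(ξ : ℂ) * (h : ℂ)) - 1)
      + (ν : ℂ) * (k : ℂ) ^ 2
        * ((Complex.exp (-(ξ : ℂ) * (h : ℂ)) - Complex.exp (-γ * (h : ℂ))) / s) ≠ 0 := by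
  have hh₀ : (h : ℂ) ≠ 0 := mod_cast hh.ne'
  have hξc : 4 / (h : ℂ) ^ 2 * sinh ((ξ : ℂ) * h / 2) ^ 2 = (k : ℂ) ^ 2 := mod_cast hξ
  refine sub_one_add_mul_sub_div_ne_zero (mod_cast hν.ne') (pow_ne_zero 2 hh₀)
    (fun hs₀ => by simp [hs₀] at hs) (exp_ne_zero _) ?_ ?_
    (sq_one_sub_exp_neg_mul hh₀ hξc) (sq_one_sub_exp_neg_mul hh₀ hγ)
  · rw [neg_mul]
    exact exp_neg_ne_one_of_re_pos (by simpa using mul_pos hξpos hh)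
  · rw [neg_mul]
    exact exp_neg_ne_one_of_re_pos (by simpa using mul_pos hγre hh)

/-- Nonvanishing of `q(s)` in the right half-plane. -/
theorem stmt_4 (h ν : ℝ) (hh : 0 < h) (hν : 0 < ν)
    (k : ℤ) (hk : k ≠ 0) (s : ℂ) (hs : 0 < s.re)
    (ξ : ℝ) (hξpos : 0 < ξ)
    (hξ : (4 / h ^ 2) * (Real.sinh (ξ * h / 2)) ^ 2 = (k : ℝ) ^ 2)
    (γ : ℂ) (hγre : 0 < γ.re)
    (hγ : (4 / (h : ℂ) ^ 2) * (Complex.sinh (γ * (h : ℂ) / 2)) ^ 2 = s / (ν : ℂ) + (k : ℂ) ^ 2) :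
    (Complex.exp (-(ξ : ℂ) * (h : ℂ)) - 1)
      + (ν : ℂ) * (k : ℂ) ^ 2
        * ((Complex.exp (-(ξ : ℂ) * (h : ℂ)) - Complex.exp (-γ * (h : ℂ))) / s) ≠ 0 :=
  stmt_4_general h ν hh hν k s hs ξ hξpos hξ γ hγre hγ
end

section
/- Let h > 0, ν > 0, let k be a nonzero integer, and let s ∈ ℂ with Re(s) > 0. Suppose U, V, P : ℕ → ℂ are square-summable sequences (Σ_j |U_j|² < ∞, Σ_j |V_j|² < ∞, Σ_j |P_j|² < ∞) satisfying, for all j ≥ 1: s·U_j = −i k·P_j − ν k²·U_j + ν·(U_{j+1} − 2U_j + U_{j−1})/h²; s·V_j = −(P_{j+1} − P_{j−1})/(2h) − ν k²·V_j + ν·(V_{j+1} − 2V_j + V_{j−1})/h²; −k²·P_j + (P_{j+1} − 2P_j + P_{j−1})/h² = 0; together with the boundary conditions U_0 = V_0 = 0 and (P_1 − P_0)/h + ν i k·(U_1 − U_0)/h = 0. Then U, V, and P are identically zero. -/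
/-!
Every component solves a second-order constant-coefficient recurrence in `j`. Its characteristic
roots have product `1`, so square-summability forces each component to be a multiple of the
powers of the root of modulus `≤ 1` (plus, for `U`, a particular solution driven by `P`):
`P j = P 0 * r ^ j` with `r + r⁻¹ = 2 + k²h²` and `U j = d * (r ^ j - ρ ^ j)` with
`ρ + ρ⁻¹ = 2 + k²h² + h²s/ν`. The pressure boundary condition then becomes
`P 0 * (q (r - 1) - a (ρ - r)) = 0` with `a = k²h²`, `q = h²s/ν`, and eliminating `r` and `ρ`
shows that the bracket can only vanish when `a + q = 0`, impossible since `Re a, Re q > 0`.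
So `P = 0`, then `U = 0`, and `V` solves the homogeneous recurrence, so `V = 0` too.
-/

open Complex Filter Topology

lemma tendsto_zero_of_summable_norm_sq {E : Type*} [SeminormedAddCommGroup E] {f : ℕ → E}
    (hf : Summable fun j => ‖f j‖ ^ 2) : Tendsto f atTop (𝓝 0) := by
  rw [tendsto_zero_iff_norm_tendsto_zero]
  have hsqrt := (Real.continuous_sqrt.tendsto 0).comp hf.tendsto_atTop_zero
  simpa only [Function.comp_def, Real.sqrt_sq (norm_nonneg _), Real.sqrt_zero] using hsqrt

lemma Complex.exists_add_eq_mul_eq_one (σ : ℂ) :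
    ∃ z w : ℂ, z + w = σ ∧ z * w = 1 ∧ ‖z‖ ≤ 1 ∧ 1 ≤ ‖w‖ := by
  obtain ⟨e, he⟩ := IsAlgClosed.exists_pow_nat_eq (σ ^ 2 - 4) two_pos
  have hsum : (σ + e) / 2 + (σ - e) / 2 = σ := by ring
  have hprod : (σ + e) / 2 * ((σ - e) / 2) = 1 := by linear_combination (-1 / 4 : ℂ) * he
  have hnorm : ‖(σ + e) / 2‖ * ‖(σ - e) / 2‖ = 1 := by rw [← norm_mul, hprod, norm_one]
  rcases le_or_gt ‖(σ + e) / 2‖ 1 with hle | hlt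
  · exact ⟨_, _, hsum, hprod, hle,
      by nlinarith [mul_le_mul_of_nonneg_right hle (norm_nonneg ((σ - e) / 2))]⟩
  · refine ⟨_, _, (add_comm _ _).trans hsum, (mul_comm _ _).trans hprod, ?_, hlt.le⟩
    nlinarith [mul_le_mul_of_nonneg_right hlt.le (norm_nonneg ((σ - e) / 2))]

lemma Complex.norm_lt_one_of_add_eq_of_mul_eq_one {z w σ : ℂ} (hsum : z + w = σ)
    (hprod : z * w = 1) (hz : ‖z‖ ≤ 1) (hσ : 2 < σ.re) : ‖z‖ < 1 := by
  refine hz.lt_of_ne fun hz1 => ?_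
  have hw1 : ‖w‖ = 1 := by simpa [hz1] using congrArg norm hprod
  have : σ.re ≤ ‖z‖ + ‖w‖ := hsum ▸ (re_le_norm _).trans (norm_add_le z w)
  linarith

lemma eq_mul_pow_of_tendsto_zero {𝕜 : Type*} [NormedField 𝕜] {f : ℕ → 𝕜} {z w : 𝕜}
    (hzw : z * w = 1) (hw : 1 ≤ ‖w‖) (hf : Tendsto f atTop (𝓝 0))
    (hrec : ∀ j, f (j + 2) = (z + w) * f (j + 1) - f j) (j : ℕ) : f j = f 0 * z ^ j := by
  set g : ℕ → 𝕜 := fun j => f (j + 1) - z * f j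
  have hg_pow : ∀ j, g j = w ^ j * g 0 := by
    intro j
    induction j with
    | zero => simp
    | succ j ih =>
      calc g (j + 1) = w * g j := by
            simp only [g, hrec]; linear_combination f j * hzw
        _ = w ^ (j + 1) * g 0 := by rw [ih]; ring
  have hg_lim : Tendsto g atTop (𝓝 0) := by
    simpa using (hf.comp (tendsto_add_atTop_nat 1)).sub (hf.const_mul z)
  have hg0 : g 0 = 0 := by
    refine norm_le_zero_iff.mp (ge_of_tendsto' (norm_zero (E := 𝕜) ▸ hg_lim.norm) fun j => ?_)
    rw [hg_pow j, norm_mul, norm_pow]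
    exact le_mul_of_one_le_left (norm_nonneg (g 0)) (one_le_pow₀ hw)
  induction j with
  | zero => simp
  | succ j ih =>
    have hgj : g j = 0 := by rw [hg_pow, hg0, mul_zero]
    have hstep : f (j + 1) = z * f j := sub_eq_zero.mp hgj
    rw [hstep, ih]; ring

/-- `d * r ^ j` is a particular solution since `r` is a root of `X² - τ X + 1`. -/
lemma eq_add_mul_pow_of_tendsto_zero {u : ℕ → ℂ} {τ q r ρ ρ' d : ℂ}
    (hr : r ^ 2 - τ * r + 1 = 0) (hr1 : ‖r‖ < 1) (hsum : ρ + ρ' = τ + q) (hprod : ρ * ρ' = 1)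
    (hρ' : 1 ≤ ‖ρ'‖) (hu : Tendsto u atTop (𝓝 0))
    (hrec : ∀ j, u (j + 2) = (τ + q) * u (j + 1) - u j - q * d * r ^ (j + 1)) (j : ℕ) :
    u j = (u 0 - d) * ρ ^ j + d * r ^ j := by
  have hw_lim : Tendsto (fun j => u j - d * r ^ j) atTop (𝓝 0) := by
    simpa using hu.sub ((tendsto_pow_atTop_nhds_zero_of_norm_lt_one hr1).const_mul d)
  have hw := eq_mul_pow_of_tendsto_zero hprod hρ' hw_lim
    (fun j => by rw [hsum, hrec j]; linear_combination -d * r ^ j * hr) j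
  simp only [pow_zero, mul_one] at hw
  linear_combination hw

/-- Once `(r - 1) (ρ - r) = q r`, the equation of `ρ` times `(r - 1)²` reduces to
`q r (a + q) = 0`. -/
lemma add_eq_zero_of_mul_sub_one_eq {K : Type*} [Field K] {a q r ρ : K} (ha : a ≠ 0)
    (hq : q ≠ 0) (hr : r ^ 2 - (2 + a) * r + 1 = 0) (hρ : ρ ^ 2 - (2 + a + q) * ρ + 1 = 0)
    (hbc : q * (r - 1) = a * (ρ - r)) : a + q = 0 := by
  have hr0 : r ≠ 0 := by rintro rfl; simp at hr
  have hρr : (r - 1) * (ρ - r) = q * r :=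
    mul_left_cancel₀ ha (by linear_combination -(r - 1) * hbc + q * hr)
  have hprod : q * r * (a + q) = 0 := by
    linear_combination (r - 1) ^ 2 * hρ - ((r - 1) ^ 2 + q * r) * hr
      - ((r - 1) * (2 * r - 2 - a - q) + 2 * q * r + ((r - 1) * (ρ - r) - q * r)) * hρr
  simpa [hq, hr0] using hprod

lemma intCast_sq_mul_ofReal_sq_re_pos {k : ℤ} {h : ℝ} (hk : k ≠ 0) (hh : h ≠ 0) :
    0 < ((k : ℂ) ^ 2 * (h : ℂ) ^ 2).re := by
  have hk' : (k : ℝ) ≠ 0 := Int.cast_ne_zero.mpr hk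
  rw [show (k : ℂ) ^ 2 * (h : ℂ) ^ 2 = ((k ^ 2 * h ^ 2 : ℝ) : ℂ) by push_cast; ring, ofReal_re]
  positivity

lemma ofReal_sq_mul_div_ofReal_re_pos {h ν : ℝ} {s : ℂ} (hh : h ≠ 0) (hν : 0 < ν)
    (hs : 0 < s.re) : 0 < ((h : ℂ) ^ 2 * s / ν).re := by
  rw [show (h : ℂ) ^ 2 * s / ν = ((h ^ 2 / ν : ℝ) : ℂ) * s by push_cast; ring, re_ofReal_mul]
  positivity

section Recurrences

variable {h ν : ℝ} {k : ℤ} {s : ℂ}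

lemma pressure_recurrence (hh : h ≠ 0) {P : ℕ → ℂ}
    (hPres : ∀ j : ℕ, 1 ≤ j →
      -(k : ℂ) ^ 2 * P j + (P (j + 1) - 2 * P j + P (j - 1)) / (h : ℂ) ^ 2 = 0) (j : ℕ) :
    P (j + 2) = (2 + (k : ℂ) ^ 2 * (h : ℂ) ^ 2) * P (j + 1) - P j := by
  have hh' : (h : ℂ) ≠ 0 := ofReal_ne_zero.mpr hh
  have hj := hPres (j + 1) le_add_self
  simp only [Nat.add_sub_cancel] at hj
  field_simp at hj
  linear_combination hj

lemma momentum_recurrence (hh : h ≠ 0) (hν : ν ≠ 0) {X F : ℕ → ℂ}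
    (hMom : ∀ j : ℕ, 1 ≤ j →
      s * X j = F j - (ν : ℂ) * (k : ℂ) ^ 2 * X j
        + (ν : ℂ) * ((X (j + 1) - 2 * X j + X (j - 1)) / (h : ℂ) ^ 2)) (j : ℕ) :
    X (j + 2) = (2 + (k : ℂ) ^ 2 * (h : ℂ) ^ 2 + (h : ℂ) ^ 2 * s / ν) * X (j + 1) - X j
      - (h : ℂ) ^ 2 / ν * F (j + 1) := by
  have hh' : (h : ℂ) ≠ 0 := ofReal_ne_zero.mpr hh
  have hν' : (ν : ℂ) ≠ 0 := ofReal_ne_zero.mpr hν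
  have hj := hMom (j + 1) le_add_self
  simp only [Nat.add_sub_cancel] at hj
  field_simp at hj ⊢
  linear_combination -hj

lemma velocity_recurrence (hh : h ≠ 0) (hν : ν ≠ 0) (hs : s ≠ 0) {U P : ℕ → ℂ} {r : ℂ}
    (hMom1 : ∀ j : ℕ, 1 ≤ j →
      s * U j = -Complex.I * (k : ℂ) * P j - (ν : ℂ) * (k : ℂ) ^ 2 * U j
        + (ν : ℂ) * ((U (j + 1) - 2 * U j + U (j - 1)) / (h : ℂ) ^ 2))
    (hP : ∀ j, P j = P 0 * r ^ j) (j : ℕ) :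
    U (j + 2) = (2 + (k : ℂ) ^ 2 * (h : ℂ) ^ 2 + (h : ℂ) ^ 2 * s / ν) * U (j + 1) - U j
      - (h : ℂ) ^ 2 * s / ν * (-(I * k * P 0) / s) * r ^ (j + 1) := by
  have hν' : (ν : ℂ) ≠ 0 := ofReal_ne_zero.mpr hν
  rw [momentum_recurrence hh hν hMom1 j, hP (j + 1)]
  field_simp

lemma boundary_relation (hh : h ≠ 0) (hν : ν ≠ 0) (hs : s ≠ 0) {U P : ℕ → ℂ} {r ρ : ℂ}
    (hBC : (P 1 - P 0) / (h : ℂ)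
      + (ν : ℂ) * Complex.I * (k : ℂ) * ((U 1 - U 0) / (h : ℂ)) = 0)
    (hU0 : U 0 = 0) (hP1 : P 1 = P 0 * r) (hU1 : U 1 = -(I * k * P 0) / s * (r - ρ)) :
    P 0 * ((h : ℂ) ^ 2 * s / ν * (r - 1) - (k : ℂ) ^ 2 * (h : ℂ) ^ 2 * (ρ - r)) = 0 := by
  have hh' : (h : ℂ) ≠ 0 := ofReal_ne_zero.mpr hh
  have hν' : (ν : ℂ) ≠ 0 := ofReal_ne_zero.mpr hν
  rw [hP1, hU1, hU0] at hBC
  field_simp at hBC ⊢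
  linear_combination (h : ℂ) ^ 2 * hBC - (h : ℂ) ^ 2 * ν * k ^ 2 * P 0 * (ρ - r) * I_sq

end Recurrences

/-- Godunov–Ryabenkii stability (α = 0): no nontrivial square-summable solution
of the homogeneous semi-discrete Stokes eigenvalue problem exists for Re(s) > 0. -/
theorem stmt_5 (h ν : ℝ) (hh : 0 < h) (hν : 0 < ν)
    (k : ℤ) (hk : k ≠ 0) (s : ℂ) (hs : 0 < s.re)
    (U V P : ℕ → ℂ)
    (hUsum : Summable fun j : ℕ => ‖U j‖ ^ 2)
    (hVsum : Summable fun j : ℕ => ‖V j‖ ^ 2)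
    (hPsum : Summable fun j : ℕ => ‖P j‖ ^ 2)
    (hMom1 : ∀ j : ℕ, 1 ≤ j →
      s * U j = -Complex.I * (k : ℂ) * P j - (ν : ℂ) * (k : ℂ) ^ 2 * U j
        + (ν : ℂ) * ((U (j + 1) - 2 * U j + U (j - 1)) / (h : ℂ) ^ 2))
    (hMom2 : ∀ j : ℕ, 1 ≤ j →
      s * V j = -((P (j + 1) - P (j - 1)) / (2 * (h : ℂ))) - (ν : ℂ) * (k : ℂ) ^ 2 * V j
        + (ν : ℂ) * ((V (j + 1) - 2 * V j + V (j - 1)) / (h : ℂ) ^ 2))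
    (hPres : ∀ j : ℕ, 1 ≤ j →
      -(k : ℂ) ^ 2 * P j + (P (j + 1) - 2 * P j + P (j - 1)) / (h : ℂ) ^ 2 = 0)
    (hU0 : U 0 = 0) (hV0 : V 0 = 0)
    (hBC : (P 1 - P 0) / (h : ℂ)
      + (ν : ℂ) * Complex.I * (k : ℂ) * ((U 1 - U 0) / (h : ℂ)) = 0) :
    (∀ j : ℕ, U j = 0) ∧ (∀ j : ℕ, V j = 0) ∧ (∀ j : ℕ, P j = 0) := by
  have hh0 : h ≠ 0 := hh.ne'
  have hν0 : ν ≠ 0 := hν.ne'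
  have hs0 : s ≠ 0 := fun h0 => by simp [h0] at hs
  set a : ℂ := (k : ℂ) ^ 2 * (h : ℂ) ^ 2
  set q : ℂ := (h : ℂ) ^ 2 * s / ν
  have ha : 0 < a.re := intCast_sq_mul_ofReal_sq_re_pos hk hh0
  have hq : 0 < q.re := ofReal_sq_mul_div_ofReal_re_pos hh0 hν hs
  obtain ⟨r, r', hrr', hr1, hr, hr'⟩ := exists_add_eq_mul_eq_one (2 + a)
  have hr_lt : ‖r‖ < 1 := norm_lt_one_of_add_eq_of_mul_eq_one hrr' hr1 hr (by simpa using ha)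
  have hr_root : r ^ 2 - (2 + a) * r + 1 = 0 := by linear_combination r * hrr' - hr1
  have hP : ∀ j, P j = P 0 * r ^ j :=
    eq_mul_pow_of_tendsto_zero hr1 hr' (tendsto_zero_of_summable_norm_sq hPsum) fun j => by
      rw [hrr']; exact pressure_recurrence hh0 hPres j
  obtain ⟨ρ, ρ', hρρ', hρ1, -, hρ'⟩ := exists_add_eq_mul_eq_one (2 + a + q)
  have hρ_root : ρ ^ 2 - (2 + a + q) * ρ + 1 = 0 := by linear_combination ρ * hρρ' - hρ1
  set d : ℂ := -(I * k * P 0) / s with hd_def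
  have hU (j : ℕ) : U j = d * (r ^ j - ρ ^ j) := by
    have hUj := eq_add_mul_pow_of_tendsto_zero hr_root hr_lt hρρ' hρ1 hρ'
      (tendsto_zero_of_summable_norm_sq hUsum) (velocity_recurrence hh0 hν0 hs0 hMom1 hP) j
    rw [hUj, hU0]; ring
  have hP0 : P 0 = 0 := by
    have hbc := boundary_relation hh0 hν0 hs0 hBC hU0 (by rw [hP 1, pow_one])
      (by rw [hU 1, pow_one, pow_one])
    refine (mul_eq_zero.mp hbc).resolve_right fun hdet => ?_
    have haq := add_eq_zero_of_mul_sub_one_eq (fun h0 => by simp [h0] at ha)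
      (fun h0 => by simp [h0] at hq) hr_root hρ_root (sub_eq_zero.mp hdet)
    linarith [show (a + q).re = 0 by rw [haq, zero_re], add_re a q]
  have hPz (j : ℕ) : P j = 0 := by rw [hP j, hP0, zero_mul]
  have hV : ∀ j, V j = V 0 * ρ ^ j :=
    eq_mul_pow_of_tendsto_zero hρ1 hρ' (tendsto_zero_of_summable_norm_sq hVsum) fun j => by
      rw [hρρ', momentum_recurrence hh0 hν0 hMom2 j]; simp only [hPz]; ring
  refine ⟨fun j => ?_, fun j => by rw [hV j, hV0, zero_mul], hPz⟩
  rw [hU j, hd_def, hP0]; simp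
end

section
/- Let k be an integer, let y ∈ ℝ, and let u, v : ℝ → ℂ be four times continuously differentiable functions satisfying i·k·u(t) + v′(t) = 0 for all t ∈ ℝ. Then the function h ↦ [ i·k·( u(y−h)/6 + 2u(y)/3 + u(y+h)/6 ) + ( v(y+h) − v(y−h) )/(2h) ] / h³ tends to 0 as h → 0⁺. -/
/-!
By the divergence-free relation, `i k (M u)(y) = -(M v')(y)`, so the expression equals
`S(h) / (2 h⁴)`, where `S(h) = v(y+h) - v(y-h) - (h/3)(v'(y+h) + v'(y-h) + 4 v'(y))` is the
defect of Simpson's rule for `∫_{y-h}^{y+h} v'`. The defect and its first two `h`-derivatives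
vanish at `h = 0`, and its third derivative is `-(h/3)(v⁗(y+h) - v⁗(y-h)) = o(h)`; integrating
three times gives `S(h) = o(h⁴)`.
-/

open Complex Filter

open Asymptotics Topology

section

variable {𝕜 E : Type*} [NontriviallyNormedField 𝕜] [NormedAddCommGroup E] [NormedSpace 𝕜 E]

theorem hasDerivAt_iteratedDeriv {f : 𝕜 → E} {n m : ℕ} (hf : ContDiff 𝕜 n f) (hm : m < n)
    (t : 𝕜) : HasDerivAt (iteratedDeriv m f) (iteratedDeriv (m + 1) f t) t := by
  rw [iteratedDeriv_succ]
  exact (hf.differentiable_iteratedDeriv m (by exact_mod_cast hm) t).hasDerivAt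

theorem hasDerivAt_comp_add_sub_comp_sub {g g' : 𝕜 → E} (hg : ∀ t, HasDerivAt g (g' t) t)
    (y h : 𝕜) :
    HasDerivAt (fun s => g (y + s) - g (y - s)) (g' (y + h) + g' (y - h)) h :=
  (((hg _).comp_const_add y h).sub ((hg _).comp_const_sub y h)).congr_deriv (sub_neg_eq_add _ _)

theorem hasDerivAt_comp_add_add_comp_sub {g g' : 𝕜 → E} (hg : ∀ t, HasDerivAt g (g' t) t)
    (y h : 𝕜) :
    HasDerivAt (fun s => g (y + s) + g (y - s)) (g' (y + h) - g' (y - h)) h :=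
  (((hg _).comp_const_add y h).add ((hg _).comp_const_sub y h)).congr_deriv
    (sub_eq_add_neg _ _).symm

end

section

variable {E : Type*} [NormedAddCommGroup E] [NormedSpace ℝ E]

theorem isLittleO_pow_succ_of_hasDerivAt {f f' : ℝ → E} {n : ℕ}
    (hf : ∀ t, HasDerivAt f (f' t) t) (h0 : f 0 = 0) (hf' : f' =o[𝓝 0] (· ^ n)) :
    f =o[𝓝 0] (· ^ (n + 1)) := by
  simpa [h0] using Convex.isLittleO_pow_succ_real convex_univ (Set.mem_univ 0)
    (fun t _ => (hf t).hasDerivWithinAt) (by simpa using hf')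

theorem simpson_defect_isLittleO {v : ℝ → E} (hv : ContDiff ℝ 4 v) (y : ℝ) :
    (fun h : ℝ => v (y + h) - v (y - h)
        - (h / 3) • (deriv v (y + h) + deriv v (y - h) + 4 • deriv v y))
      =o[𝓝 0] (· ^ 4) := by
  set D : ℕ → ℝ → E := fun m => iteratedDeriv m v
  have hD0 : ∀ t, HasDerivAt (D 0) (D 1 t) t := hasDerivAt_iteratedDeriv hv (by norm_num)
  have hD1 : ∀ t, HasDerivAt (D 1) (D 2 t) t := hasDerivAt_iteratedDeriv hv (by norm_num)
  have hD2 : ∀ t, HasDerivAt (D 2) (D 3 t) t := hasDerivAt_iteratedDeriv hv (by norm_num)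
  have hD3 : ∀ t, HasDerivAt (D 3) (D 4 t) t := hasDerivAt_iteratedDeriv hv (by norm_num)
  have hcoef (h : ℝ) : HasDerivAt (fun s : ℝ => s / 3) (1 / 3) h := (hasDerivAt_id h).div_const 3
  have h3 : (fun h : ℝ => -(h / 3) • (D 4 (y + h) - D 4 (y - h))) =o[𝓝 0] (· ^ 1) := by
    have hodd : Tendsto (fun h : ℝ => D 4 (y + h) - D 4 (y - h)) (𝓝 0) (𝓝 0) := by
      have hc := hv.continuous_iteratedDeriv 4 le_rfl
      exact ((hc.comp' (continuous_const_add y)).sub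
        (hc.comp' (continuous_const.sub continuous_id))).tendsto' 0 0 (by simp)
    have hcoefO : (fun h : ℝ => -(h / 3)) =O[𝓝 0] id := by
      simpa [neg_div, div_eq_inv_mul] using (isBigO_refl id (𝓝 (0 : ℝ))).const_mul_left (-3⁻¹)
    simpa using hcoefO.smul_isLittleO ((isLittleO_one_iff ℝ).mpr hodd)
  have h2 := isLittleO_pow_succ_of_hasDerivAt (f := fun h : ℝ =>
    (1 / 3 : ℝ) • (D 2 (y + h) - D 2 (y - h)) - (h / 3) • (D 3 (y + h) + D 3 (y - h)))
    (fun h => by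
      refine (((hasDerivAt_comp_add_sub_comp_sub hD2 y h).const_smul (1 / 3 : ℝ)).sub
        ((hcoef h).smul (hasDerivAt_comp_add_add_comp_sub hD3 y h))).congr_deriv ?_
      module) (by simp) h3
  have h1 := isLittleO_pow_succ_of_hasDerivAt (f := fun h : ℝ =>
    (2 / 3 : ℝ) • (D 1 (y + h) + D 1 (y - h)) - (4 / 3 : ℝ) • D 1 y
      - (h / 3) • (D 2 (y + h) - D 2 (y - h)))
    (fun h => by
      refine ((((hasDerivAt_comp_add_add_comp_sub hD1 y h).const_smul (2 / 3 : ℝ)).sub_const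
        ((4 / 3 : ℝ) • D 1 y)).sub
        ((hcoef h).smul (hasDerivAt_comp_add_sub_comp_sub hD2 y h))).congr_deriv ?_
      module) (by simp; module) h2
  have h0 := isLittleO_pow_succ_of_hasDerivAt (f := fun h : ℝ =>
    D 0 (y + h) - D 0 (y - h) - (h / 3) • (D 1 (y + h) + D 1 (y - h) + 4 • D 1 y))
    (fun h => by
      refine ((hasDerivAt_comp_add_sub_comp_sub hD0 y h).sub ((hcoef h).smul
        ((hasDerivAt_comp_add_add_comp_sub hD1 y h).add_const (4 • D 1 y)))).congr_deriv ?_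
      module) (by simp) h1
  simpa [D] using h0

end

theorem stmt_6_general (k : ℤ) (y : ℝ) (u v : ℝ → ℂ)
    (hv : ContDiff ℝ 4 v)
    (hdiv : ∀ t : ℝ, Complex.I * (k : ℂ) * u t + deriv v t = 0) :
    Tendsto
      (fun h : ℝ =>
        (Complex.I * (k : ℂ) * (u (y - h) / 6 + 2 * u y / 3 + u (y + h) / 6)
          + (v (y + h) - v (y - h)) / (2 * (h : ℂ))) / (h : ℂ) ^ 3)
      (nhdsWithin 0 (Set.Ioi 0)) (nhds 0) := by
  have hsimpson := ((simpson_defect_isLittleO hv y).mono nhdsWithin_le_nhds).trans_isBigO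
    (isBigO_of_le _ fun h => by simp : (· ^ 4) =O[𝓝[>] 0] fun h : ℝ => (h : ℂ) ^ 4)
  simp only [Complex.real_smul, nsmul_eq_mul] at hsimpson
  push_cast at hsimpson
  refine (hsimpson.tendsto_div_nhds_zero.div_const 2).congr' ?_ |>.trans (by rw [zero_div])
  filter_upwards [self_mem_nhdsWithin] with h (hh : 0 < h)
  have hh' : (h : ℂ) ≠ 0 := by exact_mod_cast hh.ne'
  field_simp
  linear_combination -6 * (h : ℂ) * (hdiv (y - h) + 4 * hdiv y + hdiv (y + h))

/-- Truncation error of the discrete divergence on a divergence-free mode: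
`i k·Mu + D₀v = O(h⁴)`. -/
theorem stmt_6 (k : ℤ) (y : ℝ) (u v : ℝ → ℂ)
    (hu : ContDiff ℝ 4 u) (hv : ContDiff ℝ 4 v)
    (hdiv : ∀ t : ℝ, Complex.I * (k : ℂ) * u t + deriv v t = 0) :
    Tendsto
      (fun h : ℝ =>
        (Complex.I * (k : ℂ) * (u (y - h) / 6 + 2 * u y / 3 + u (y + h) / 6)
          + (v (y + h) - v (y - h)) / (2 * (h : ℂ))) / (h : ℂ) ^ 3)
      (nhdsWithin 0 (Set.Ioi 0)) (nhds 0) :=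
  stmt_6_general k y u v hv hdiv
end

section
/- Let h > 0, ν > 0, α > 0 be real, let k be a nonzero integer, and let s ∈ ℂ with Re(s) > 0. Then (α+s)² + (s + α + νk²)·α h² k² ≠ 0. -/
open Complex

/-- Nonvanishing of the discriminant of the quadratic factor for Re(s) > 0. -/
theorem stmt_10 (h ν α : ℝ) (hh : 0 < h) (hν : 0 < ν) (hα : 0 < α)
    (k : ℤ) (hk : k ≠ 0) (s : ℂ) (hs : 0 < s.re) :
    ((α : ℂ) + s) ^ 2
      + (s + (α : ℂ) + (ν : ℂ) * (k : ℂ) ^ 2) * (α : ℂ) * (h : ℂ) ^ 2 * (k : ℂ) ^ 2 ≠ 0 := by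
  intro H
  have hkk : (1 : ℝ) ≤ (k : ℝ) * (k : ℝ) := by
    have : (1 : ℤ) ≤ k * k := by
      rcases lt_or_gt_of_ne hk with h1 | h1
      · nlinarith
      · nlinarith
    exact_mod_cast this
  have him := congrArg Complex.im H
  have hre := congrArg Complex.re H
  simp [Complex.ext_iff, pow_two] at him hre
  have hC : 0 < 2 * (α + s.re) + α * (h * h) * ((k : ℝ) * k) := by
    have : 0 < α * (h * h) * ((k : ℝ) * k) := by
      apply mul_pos (by positivity); linarith
    linarith
  have him' : s.im * (2 * (α + s.re) + α * (h * h) * ((k : ℝ) * k)) = 0 := by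
    linear_combination him
  have hb : s.im = 0 := by
    rcases mul_eq_zero.1 him' with h' | h'
    · exact h'
    · exact absurd h' (ne_of_gt hC)
  rw [hb] at hre
  have hA : 0 < α * (h * h) * ((k : ℝ) * k) := by
    apply mul_pos (by positivity); linarith
  have hB : 0 < s.re + α + ν * ((k : ℝ) * k) := by nlinarith
  nlinarith [mul_pos hB hA, mul_self_nonneg (α + s.re)]
end

section
/- Let h > 0, ν > 0, α > 0 be real, let k be a nonzero integer, and let s ∈ ℂ with Re(s) > 0. Set d = h²(s + νk²)/ν. Then (ν − αh²/4)·d² − h²·(s + 2νk² + α)·d + h⁴k²·(s + νk² + α) ≠ 0. -/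
open Complex

/-
Substituting `d = h²w/ν` with `w = s + νk²` collapses the quadratic to
`-α h⁴ (h² w² + 4νs) / (4ν²)`. If `h² w² + 4νs = 0`, its imaginary part
`Im s · (2h² Re w + 4ν)` vanishes, and `Re w ≥ Re s > 0` forces `s` to be real;
but then `h² w² + 4νs > 0`.
-/

theorem quadratic_factor_eval_linear_root {K : Type*} [Field K] [CharZero K]
    (h ν α k s : K) (hν : ν ≠ 0) :
    (ν - α * h ^ 2 / 4) * (h ^ 2 * (s + ν * k ^ 2) / ν) ^ 2
      - h ^ 2 * (s + 2 * ν * k ^ 2 + α) * (h ^ 2 * (s + ν * k ^ 2) / ν)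
      + h ^ 4 * k ^ 2 * (s + ν * k ^ 2 + α)
      = -(α * h ^ 4 / (4 * ν ^ 2)) * (h ^ 2 * (s + ν * k ^ 2) ^ 2 + 4 * ν * s) := by
  field_simp
  ring

theorem mul_add_sq_add_mul_ne_zero {a b c : ℝ} (ha : 0 ≤ a) (hb : 0 < b) (hc : 0 ≤ c)
    {s : ℂ} (hs : 0 < s.re) : (a : ℂ) * (s + c) ^ 2 + b * s ≠ 0 := by
  intro hzero
  have hre := congrArg re hzero
  have him := congrArg im hzero
  simp only [add_re, add_im, mul_re, mul_im, ofReal_re, ofReal_im, sq, zero_re, zero_im,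
    zero_mul, sub_zero, add_zero] at hre him
  have hs_im : s.im = 0 := by
    have : s.im * (2 * a * (s.re + c) + b) = 0 := by linear_combination him
    exact (mul_eq_zero.mp this).resolve_right (by positivity)
  rw [hs_im] at hre
  nlinarith [mul_nonneg ha (mul_self_nonneg (s.re + c))]

theorem stmt_11_general (h ν α : ℝ) (hh : 0 < h) (hν : 0 < ν) (hα : 0 < α)
    (k : ℤ) (s : ℂ) (hs : 0 < s.re)
    (d : ℂ) (hd : d = (h : ℂ) ^ 2 * (s + (ν : ℂ) * (k : ℂ) ^ 2) / (ν : ℂ)) :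
    ((ν : ℂ) - (α : ℂ) * (h : ℂ) ^ 2 / 4) * d ^ 2
      - (h : ℂ) ^ 2 * (s + 2 * (ν : ℂ) * (k : ℂ) ^ 2 + (α : ℂ)) * d
      + (h : ℂ) ^ 4 * (k : ℂ) ^ 2 * (s + (ν : ℂ) * (k : ℂ) ^ 2 + (α : ℂ)) ≠ 0 := by
  subst hd
  rw [quadratic_factor_eval_linear_root _ _ _ _ _ (ofReal_ne_zero.mpr hν.ne')]
  refine mul_ne_zero (neg_ne_zero.mpr ?_) ?_
  · have : (α * h ^ 4 / (4 * ν ^ 2) : ℝ) ≠ 0 := by positivity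
    exact_mod_cast this
  · have key := mul_add_sq_add_mul_ne_zero (sq_nonneg h) (by positivity : 0 < 4 * ν)
      (by positivity : 0 ≤ ν * (k : ℝ) ^ 2) hs
    push_cast at key
    exact key

/-- The root `d₂^(1) = h²(s+νk²)/ν` of the linear factor is not a root of the
quadratic factor when Re(s) > 0. -/
theorem stmt_11 (h ν α : ℝ) (hh : 0 < h) (hν : 0 < ν) (hα : 0 < α)
    (k : ℤ) (hk : k ≠ 0) (s : ℂ) (hs : 0 < s.re)
    (d : ℂ) (hd : d = (h : ℂ) ^ 2 * (s + (ν : ℂ) * (k : ℂ) ^ 2) / (ν : ℂ)) :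
    ((ν : ℂ) - (α : ℂ) * (h : ℂ) ^ 2 / 4) * d ^ 2
      - (h : ℂ) ^ 2 * (s + 2 * (ν : ℂ) * (k : ℂ) ^ 2 + (α : ℂ)) * d
      + (h : ℂ) ^ 4 * (k : ℂ) ^ 2 * (s + (ν : ℂ) * (k : ℂ) ^ 2 + (α : ℂ)) ≠ 0 :=
  stmt_11_general h ν α hh hν hα k s hs d hd
end

section
/- Let d ∈ ℂ and suppose d is not a real number lying in the closed interval [−4, 0]. Then there exists exactly one λ ∈ ℂ with |λ| < 1 satisfying λ² − (2 + d)·λ + 1 = 0. -/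
open Complex

/-! The roots of `λ² − (2 + d)λ + 1` are a pair `a, a⁻¹`, so exactly one of them lies in the open
unit disc unless both lie on the unit circle. A root `λ` of modulus one satisfies `λ⁻¹ = conj λ`,
hence `2 + d = λ + conj λ = 2 Re λ`, which forces `d` to be real and in `[−4, 0]`. -/

theorem existsUnique_norm_lt_one_eq_or_eq_inv {K : Type*} [NormedDivisionRing K] {a : K}
    (ha : ‖a‖ ≠ 1) : ∃! l : K, ‖l‖ < 1 ∧ (l = a ∨ l = a⁻¹) := by
  rcases ha.lt_or_gt with hlt | hgt
  · refine ⟨a, ⟨hlt, .inl rfl⟩, ?_⟩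
    rintro y ⟨hy, rfl | rfl⟩
    · rfl
    · rcases eq_or_ne a 0 with rfl | ha0
      · simp
      · have : 1 < ‖a⁻¹‖ := by
          rw [norm_inv]; exact one_lt_inv₀ (norm_pos_iff.mpr ha0) |>.mpr hlt
        exact absurd hy this.not_gt
  · have hinv : ‖a⁻¹‖ < 1 := by rw [norm_inv]; exact inv_lt_one_of_one_lt₀ hgt
    refine ⟨a⁻¹, ⟨hinv, .inr rfl⟩, ?_⟩
    rintro y ⟨hy, rfl | rfl⟩
    · exact absurd hy hgt.not_gt
    · rfl

theorem sq_sub_mul_add_one_eq_zero_iff {K : Type*} [Field K] {a c : K} (ha : a ^ 2 - c * a + 1 = 0)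
    (x : K) : x ^ 2 - c * x + 1 = 0 ↔ x = a ∨ x = a⁻¹ := by
  have ha0 : a ≠ 0 := by rintro rfl; simp at ha
  have hc : c = a + a⁻¹ := by field_simp; linear_combination -ha
  have hfactor : x ^ 2 - c * x + 1 = (x - a) * (x - a⁻¹) := by
    rw [hc]; field_simp; ring
  rw [hfactor, mul_eq_zero, sub_eq_zero, sub_eq_zero]

theorem eq_two_mul_re_of_norm_eq_one {x c : ℂ} (hx : ‖x‖ = 1) (hroot : x ^ 2 - c * x + 1 = 0) :
    c = 2 * x.re := by
  have hx0 : x ≠ 0 := by rintro rfl; simp at hx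
  have hc : c = x + x⁻¹ := by field_simp; linear_combination -hroot
  rw [hc, inv_eq_conj hx]
  exact_mod_cast add_conj x

/-- If `d` is not a real number in `[−4, 0]`, the quadratic `λ² − (2+d)λ + 1 = 0`
has exactly one root of modulus less than one. -/
theorem stmt_12 (d : ℂ) (hd : ¬ ∃ r : ℝ, r ∈ Set.Icc (-4 : ℝ) 0 ∧ d = (r : ℂ)) :
    ∃! l : ℂ, ‖l‖ < 1 ∧ l ^ 2 - (2 + d) * l + 1 = 0 := by
  obtain ⟨a, ha⟩ : ∃ a : ℂ, a ^ 2 - (2 + d) * a + 1 = 0 := by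
    obtain ⟨a, ha⟩ := exists_quadratic_eq_zero one_ne_zero
      (IsAlgClosed.exists_eq_mul_self (discrim 1 (-(2 + d)) 1))
    exact ⟨a, by linear_combination ha⟩
  have hnorm : ‖a‖ ≠ 1 := by
    intro h1
    have hre : |a.re| ≤ 1 := h1 ▸ abs_re_le_norm a
    refine hd ⟨2 * a.re - 2, ⟨by linarith [abs_le.mp hre], by linarith [abs_le.mp hre]⟩, ?_⟩
    push_cast
    linear_combination eq_two_mul_re_of_norm_eq_one h1 ha
  simpa only [sq_sub_mul_add_one_eq_zero_iff ha] using existsUnique_norm_lt_one_eq_or_eq_inv hnorm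
end

section
/- Let ν > 0 and α > 0 be real, let k be a nonzero integer, and let s ∈ ℂ with Re(s) > 0. Denote by z^(1/2) the principal branch of the complex square root. Then, as h → 0⁺: (i) [h²(s + 2νk² + α) + (((α+s)² + (s+α+νk²)·α h² k²)·h⁴)^(1/2)] / (2(ν − αh²/4)·h²) tends to (s + νk² + α)/ν; and (ii) [h²(s + 2νk² + α) − (((α+s)² + (s+α+νk²)·α h² k²)·h⁴)^(1/2)] / (2(ν − αh²/4)·h²) tends to k². -/
open Complex Filter

lemma aux_mul_cpow_half (X : ℂ) {r : ℝ} (hr : 0 < r) :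
    (X * (r : ℂ)) ^ ((1 : ℂ) / 2) = X ^ ((1 : ℂ) / 2) * (Real.sqrt r : ℂ) := by
  rcases eq_or_ne X 0 with rfl | hX
  · simp [Complex.zero_cpow (by norm_num : ((1:ℂ)/2) ≠ 0)]
  · have hr0 : (r : ℂ) ≠ 0 := by exact_mod_cast hr.ne'
    rw [mul_comm, Complex.cpow_def_of_ne_zero (mul_ne_zero hr0 hX),
      Complex.log_ofReal_mul hr hX, add_mul, Complex.exp_add,
      Complex.cpow_def_of_ne_zero hX, mul_comm]
    congr 1
    have : ((Real.log r : ℂ)) * (1 / 2) = ((Real.log (Real.sqrt r) : ℝ) : ℂ) := by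
      rw [Real.log_sqrt hr.le]; push_cast; ring
    rw [this, ← Complex.ofReal_exp, Real.exp_log (Real.sqrt_pos.2 hr)]

/-- Limits of the roots `d₂^(2)/h²` and `d₂^(3)/h²` as `h → 0⁺`. -/
theorem stmt_13 (ν α : ℝ) (hν : 0 < ν) (hα : 0 < α)
    (k : ℤ) (hk : k ≠ 0) (s : ℂ) (hs : 0 < s.re) :
    Tendsto
      (fun h : ℝ =>
        ((h : ℂ) ^ 2 * (s + 2 * (ν : ℂ) * (k : ℂ) ^ 2 + (α : ℂ))
            + ((((α : ℂ) + s) ^ 2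
                + (s + (α : ℂ) + (ν : ℂ) * (k : ℂ) ^ 2) * (α : ℂ) * (h : ℂ) ^ 2 * (k : ℂ) ^ 2)
              * (h : ℂ) ^ 4) ^ ((1 : ℂ) / 2))
          / (2 * ((ν : ℂ) - (α : ℂ) * (h : ℂ) ^ 2 / 4) * (h : ℂ) ^ 2))
      (nhdsWithin 0 (Set.Ioi 0))
      (nhds ((s + (ν : ℂ) * (k : ℂ) ^ 2 + (α : ℂ)) / (ν : ℂ))) ∧
    Tendsto
      (fun h : ℝ =>
        ((h : ℂ) ^ 2 * (s + 2 * (ν : ℂ) * (k : ℂ) ^ 2 + (α : ℂ))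
            - ((((α : ℂ) + s) ^ 2
                + (s + (α : ℂ) + (ν : ℂ) * (k : ℂ) ^ 2) * (α : ℂ) * (h : ℂ) ^ 2 * (k : ℂ) ^ 2)
              * (h : ℂ) ^ 4) ^ ((1 : ℂ) / 2))
          / (2 * ((ν : ℂ) - (α : ℂ) * (h : ℂ) ^ 2 / 4) * (h : ℂ) ^ 2))
      (nhdsWithin 0 (Set.Ioi 0))
      (nhds ((k : ℂ) ^ 2)) := by
  set c : ℂ := s + 2 * (ν : ℂ) * (k : ℂ) ^ 2 + (α : ℂ) with hc
  set X : ℝ → ℂ := fun h =>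
    ((α : ℂ) + s) ^ 2 + (s + (α : ℂ) + (ν : ℂ) * (k : ℂ) ^ 2) * (α : ℂ) * (h : ℂ) ^ 2 * (k : ℂ) ^ 2
    with hXdef
  -- re of α + s is positive
  have hre : 0 < ((α : ℂ) + s).re := by
    simp only [Complex.add_re, Complex.ofReal_re]
    linarith
  -- limit of X
  have hXlim : Tendsto X (nhdsWithin 0 (Set.Ioi 0)) (nhds (((α : ℂ) + s) ^ 2)) := by
    have : Tendsto X (nhds (0 : ℝ)) (nhds (X 0)) := by
      apply Continuous.tendsto
      fun_prop
    have h0 : X 0 = ((α : ℂ) + s) ^ 2 := by simp [hXdef]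
    exact (h0 ▸ this).mono_left nhdsWithin_le_nhds
  -- slit plane membership
  have hslit : (((α : ℂ) + s) ^ 2) ∈ Complex.slitPlane := by
    rcases eq_or_ne ((α : ℂ) + s).im 0 with hb | hb
    · left
      have : (((α : ℂ) + s) ^ 2).re = ((α : ℂ) + s).re ^ 2 - ((α : ℂ) + s).im ^ 2 := by
        rw [pow_two, Complex.mul_re]; ring
      rw [this, hb]
      nlinarith [pow_pos hre 2]
    · right
      have : (((α : ℂ) + s) ^ 2).im = 2 * ((α : ℂ) + s).re * ((α : ℂ) + s).im := by
        rw [pow_two, Complex.mul_im]; ring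
      rw [this]
      exact mul_ne_zero (mul_ne_zero two_ne_zero hre.ne') hb
  -- sqrt of the limit
  have hsq : (((α : ℂ) + s) ^ 2) ^ ((1 : ℂ) / 2) = (α : ℂ) + s := by
    rw [one_div]
    exact_mod_cast Complex.sq_cpow_two_inv hre
  have hsqrtlim : Tendsto (fun h : ℝ => (X h) ^ ((1 : ℂ) / 2)) (nhdsWithin 0 (Set.Ioi 0))
      (nhds ((α : ℂ) + s)) := by
    have := (continuousAt_cpow_const (b := (1 : ℂ) / 2) hslit).tendsto.comp hXlim
    rwa [hsq] at this
  -- limit of denominator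
  have hdenlim : Tendsto (fun h : ℝ => 2 * ((ν : ℂ) - (α : ℂ) * (h : ℂ) ^ 2 / 4))
      (nhdsWithin 0 (Set.Ioi 0)) (nhds (2 * (ν : ℂ))) := by
    have : Tendsto (fun h : ℝ => 2 * ((ν : ℂ) - (α : ℂ) * (h : ℂ) ^ 2 / 4)) (nhds (0 : ℝ))
        (nhds (2 * ((ν : ℂ) - (α : ℂ) * (0 : ℂ) ^ 2 / 4))) := by
      apply Continuous.tendsto'
      · fun_prop
      · norm_num
    simpa using this.mono_left nhdsWithin_le_nhds
  have hν' : (ν : ℂ) ≠ 0 := by exact_mod_cast hν.ne'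
  have h2ν : (2 : ℂ) * (ν : ℂ) ≠ 0 := mul_ne_zero two_ne_zero hν'
  -- pointwise identity on Ioi 0
  have hev : ∀ h ∈ Set.Ioi (0 : ℝ), ∀ sign : ℂ,
      ((h : ℂ) ^ 2 * c + sign * ((X h * (h : ℂ) ^ 4) ^ ((1 : ℂ) / 2)))
          / (2 * ((ν : ℂ) - (α : ℂ) * (h : ℂ) ^ 2 / 4) * (h : ℂ) ^ 2)
        = (c + sign * (X h) ^ ((1 : ℂ) / 2)) / (2 * ((ν : ℂ) - (α : ℂ) * (h : ℂ) ^ 2 / 4)) := by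
    intro h hh sign
    have hh' : (0 : ℝ) < h := hh
    have h4 : ((h : ℂ) ^ 4) = ((h ^ 4 : ℝ) : ℂ) := by push_cast; ring
    have hr4 : (0 : ℝ) < h ^ 4 := by positivity
    have hsqrt4 : Real.sqrt (h ^ 4) = h ^ 2 := by
      rw [show h ^ 4 = (h ^ 2) ^ 2 by ring, Real.sqrt_sq (by positivity)]
    have key : (X h * (h : ℂ) ^ 4) ^ ((1 : ℂ) / 2) = (X h) ^ ((1 : ℂ) / 2) * (h : ℂ) ^ 2 := by
      rw [h4, aux_mul_cpow_half (X h) hr4, hsqrt4]; push_cast; ring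
    rw [key]
    have hh2 : ((h : ℂ) ^ 2) ≠ 0 := by
      exact_mod_cast pow_ne_zero 2 (Complex.ofReal_ne_zero.2 hh'.ne')
    rw [show (h : ℂ) ^ 2 * c + sign * ((X h) ^ ((1 : ℂ) / 2) * (h : ℂ) ^ 2)
        = (c + sign * (X h) ^ ((1 : ℂ) / 2)) * (h : ℂ) ^ 2 by ring,
      mul_div_assoc, mul_comm (2 * ((ν : ℂ) - (α : ℂ) * (h : ℂ) ^ 2 / 4)) ((h : ℂ) ^ 2),
      ← div_div, div_self hh2]
    ring
  constructor
  · have hlim : Tendsto (fun h : ℝ => (c + (X h) ^ ((1 : ℂ) / 2))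
        / (2 * ((ν : ℂ) - (α : ℂ) * (h : ℂ) ^ 2 / 4)))
        (nhdsWithin 0 (Set.Ioi 0)) (nhds ((c + ((α : ℂ) + s)) / (2 * (ν : ℂ)))) :=
      (tendsto_const_nhds.add hsqrtlim).div hdenlim h2ν
    have heq : (c + ((α : ℂ) + s)) / (2 * (ν : ℂ))
        = (s + (ν : ℂ) * (k : ℂ) ^ 2 + (α : ℂ)) / (ν : ℂ) := by
      rw [hc]; field_simp; ring
    rw [heq] at hlim
    refine hlim.congr' ?_
    filter_upwards [self_mem_nhdsWithin] with h hh
    have := hev h hh 1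
    simp only [one_mul] at this
    exact this.symm
  · have hlim : Tendsto (fun h : ℝ => (c + (-1 : ℂ) * (X h) ^ ((1 : ℂ) / 2))
        / (2 * ((ν : ℂ) - (α : ℂ) * (h : ℂ) ^ 2 / 4)))
        (nhdsWithin 0 (Set.Ioi 0)) (nhds ((c + (-1 : ℂ) * ((α : ℂ) + s)) / (2 * (ν : ℂ)))) :=
      (tendsto_const_nhds.add (hsqrtlim.const_mul _)).div hdenlim h2ν
    have heq : (c + (-1 : ℂ) * ((α : ℂ) + s)) / (2 * (ν : ℂ)) = (k : ℂ) ^ 2 := by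
      rw [hc]; field_simp; ring
    rw [heq] at hlim
    refine hlim.congr' ?_
    filter_upwards [self_mem_nhdsWithin] with h hh
    have := hev h hh (-1)
    rw [show ((h : ℂ) ^ 2 * c + (-1) * ((X h * (h : ℂ) ^ 4) ^ ((1 : ℂ) / 2)))
        = (h : ℂ) ^ 2 * c - (X h * (h : ℂ) ^ 4) ^ ((1 : ℂ) / 2) by ring] at this
    exact this.symm
end

section
/- Let c ∈ ℂ with c not a nonpositive real number, and let d : ℝ → ℂ be a function such that d(h)/h² tends to c as h → 0⁺. Define λ(h) = (2 + d(h) − (d(h)·(d(h) + 4))^(1/2)) / 2, where z^(1/2) denotes the principal branch of the complex square root. Then (λ(h) − 1)/h tends to −c^(1/2) as h → 0⁺. -/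
open Complex Filter

lemma aux_cpow_half (r : ℝ) (hr : 0 < r) (z : ℂ) :
    ((r : ℂ) * z) ^ ((1 : ℂ) / 2) = (Real.sqrt r : ℂ) * z ^ ((1 : ℂ) / 2) := by
  rcases eq_or_ne z 0 with rfl | hz
  · simp [Complex.zero_cpow (by norm_num : (1 : ℂ) / 2 ≠ 0)]
  · have hr' : (r : ℂ) ≠ 0 := by exact_mod_cast hr.ne'
    rw [Complex.cpow_def_of_ne_zero (mul_ne_zero hr' hz),
      Complex.cpow_def_of_ne_zero hz, Complex.log_ofReal_mul hr hz, add_mul,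
      Complex.exp_add]
    congr 1
    have h1 : (Real.log r : ℂ) * (1 / 2) = ((Real.log r / 2 : ℝ) : ℂ) := by
      push_cast; ring
    rw [h1, ← Complex.ofReal_exp]
    congr 1
    rw [Real.sqrt_eq_rpow, Real.rpow_def_of_pos hr]
    ring_nf

/-- If `d(h)/h² → c` with `c` not a nonpositive real, then the decaying root
`λ(h)` of `λ² − (2+d(h))λ + 1 = 0` satisfies `(λ(h) − 1)/h → −√c`. -/
theorem stmt_14 (c : ℂ) (hc : ¬ ∃ r : ℝ, r ≤ 0 ∧ c = (r : ℂ))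
    (d : ℝ → ℂ)
    (hd : Tendsto (fun h : ℝ => d h / (h : ℂ) ^ 2) (nhdsWithin 0 (Set.Ioi 0)) (nhds c)) :
    Tendsto
      (fun h : ℝ =>
        (((2 + d h - (d h * (d h + 4)) ^ ((1 : ℂ) / 2)) / 2) - 1) / (h : ℂ))
      (nhdsWithin 0 (Set.Ioi 0)) (nhds (-(c ^ ((1 : ℂ) / 2)))) := by
  set e : ℝ → ℂ := fun h => d h / (h : ℂ) ^ 2 with he
  have hslit : c ∈ Complex.slitPlane := by
    rcases lt_or_ge 0 c.re with h | h
    · exact Or.inl h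
    · refine Or.inr fun him => hc ⟨c.re, h, ?_⟩
      exact Complex.ext rfl (by simp [him])
  have hco : Tendsto (fun h : ℝ => (h : ℂ)) (nhdsWithin 0 (Set.Ioi 0)) (nhds 0) := by
    simpa using (Complex.continuous_ofReal.tendsto 0).mono_left nhdsWithin_le_nhds
  have harg : Tendsto (fun h : ℝ => e h * ((h : ℂ) ^ 2 * e h + 4))
      (nhdsWithin 0 (Set.Ioi 0)) (nhds (c * 4)) := by
    have h2 : Tendsto (fun h : ℝ => (h : ℂ) ^ 2 * e h + 4)
        (nhdsWithin 0 (Set.Ioi 0)) (nhds 4) := by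
      have := ((hco.pow 2).mul hd).add (tendsto_const_nhds (x := (4 : ℂ)))
      simpa using this
    simpa using hd.mul h2
  have h4slit : c * 4 ∈ Complex.slitPlane := by
    rcases hslit with h | h
    · left; simp [Complex.mul_re]; linarith
    · right; simpa [Complex.mul_im] using h
  have hsq : Tendsto (fun h : ℝ => (e h * ((h : ℂ) ^ 2 * e h + 4)) ^ ((1 : ℂ) / 2))
      (nhdsWithin 0 (Set.Ioi 0)) (nhds ((c * 4) ^ ((1 : ℂ) / 2))) :=
    (continuousAt_cpow_const h4slit).tendsto.comp harg
  have hg : Tendsto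
      (fun h : ℝ => ((h : ℂ) * e h - (e h * ((h : ℂ) ^ 2 * e h + 4)) ^ ((1 : ℂ) / 2)) / 2)
      (nhdsWithin 0 (Set.Ioi 0)) (nhds (-(c ^ ((1 : ℂ) / 2)))) := by
    have hlim := ((hco.mul hd).sub hsq).div_const 2
    have hval : (0 * c - (c * 4) ^ ((1 : ℂ) / 2)) / 2 = -(c ^ ((1 : ℂ) / 2)) := by
      have h1 : c * 4 = ((4 : ℝ) : ℂ) * c := by push_cast; ring
      have h2 : Real.sqrt 4 = 2 := by
        rw [show (4 : ℝ) = 2 ^ 2 by norm_num, Real.sqrt_sq (by norm_num)]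
      rw [h1, aux_cpow_half 4 (by norm_num) c, h2]
      push_cast
      ring
    rwa [hval] at hlim
  refine Tendsto.congr' ?_ hg
  filter_upwards [self_mem_nhdsWithin] with h hh
  have hhp : (0 : ℝ) < h := hh
  have hk : (h : ℂ) ≠ 0 := by exact_mod_cast hhp.ne'
  have hdh : (h : ℂ) ^ 2 * e h = d h := by
    rw [he]; field_simp
  have harg2 : d h * (d h + 4) = ((h ^ 2 : ℝ) : ℂ) * (e h * ((h : ℂ) ^ 2 * e h + 4)) := by
    rw [← hdh]; push_cast; ring
  rw [harg2, aux_cpow_half _ (by positivity) _, Real.sqrt_sq hhp.le, ← hdh]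
  field_simp
  ring
end

section
/- Let ν > 0 and α > 0 be real, let k be a nonzero integer, let s ∈ ℂ with Re(s) > 0, and let z^(1/2) denote the principal branch of the complex square root. Then (α + s) · ( |k| · ((νk² + s)/ν)^(1/2) − k² ) · ((νk² + α + s)/ν)^(1/2) ≠ 0. -/
open Complex

/-!
The first factor has positive real part, and the last is a square root of a number of positive
real part. For the middle one write `w = ((νk² + s)/ν)^(1/2)`, so `w² = |k|² + s/ν`; if
`|k| w = k² = |k|²`, squaring gives `|k|² s/ν = 0`, impossible since `s ≠ 0`.
-/

lemma Complex.cpow_one_half_sq (z : ℂ) : (z ^ ((1 : ℂ) / 2)) ^ 2 = z := by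
  simp [one_div]

lemma mul_ne_sq_of_sq_eq_sq_add {K : Type*} [Field K] {x w c : K} (hx : x ≠ 0) (hc : c ≠ 0)
    (hw : w ^ 2 = x ^ 2 + c) : x * w ≠ x ^ 2 := by
  intro h
  have hxc : x ^ 2 * c = 0 := by linear_combination (x * w + x ^ 2) * h - x ^ 2 * hw
  exact mul_ne_zero (pow_ne_zero 2 hx) hc hxc

/-- Nonvanishing of the limiting boundary determinant for Re(s) > 0. -/
theorem stmt_16 (ν α : ℝ) (hν : 0 < ν) (hα : 0 < α)
    (k : ℤ) (hk : k ≠ 0) (s : ℂ) (hs : 0 < s.re) :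
    ((α : ℂ) + s)
      * (((|k| : ℤ) : ℂ) * (((ν : ℂ) * (k : ℂ) ^ 2 + s) / (ν : ℂ)) ^ ((1 : ℂ) / 2)
        - (k : ℂ) ^ 2)
      * ((((ν : ℂ) * (k : ℂ) ^ 2 + (α : ℂ) + s) / (ν : ℂ)) ^ ((1 : ℂ) / 2)) ≠ 0 := by
  have hν0 : (ν : ℂ) ≠ 0 := ofReal_ne_zero.mpr hν.ne'
  have h_first : (α : ℂ) + s ≠ 0 := ne_zero_of_re_pos <| by
    simp only [add_re, ofReal_re]
    positivity
  have h_middle : ((|k| : ℤ) : ℂ) * (((ν : ℂ) * (k : ℂ) ^ 2 + s) / (ν : ℂ)) ^ ((1 : ℂ) / 2)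
      ≠ (k : ℂ) ^ 2 := by
    have habs_sq : ((|k| : ℤ) : ℂ) ^ 2 = (k : ℂ) ^ 2 := by exact_mod_cast sq_abs k
    rw [← habs_sq]
    refine mul_ne_sq_of_sq_eq_sq_add (c := s / ν) (by exact_mod_cast abs_ne_zero.mpr hk)
      (div_ne_zero (ne_zero_of_re_pos hs) hν0) ?_
    rw [cpow_one_half_sq, habs_sq]
    field_simp
  have h_last_base : ((ν : ℂ) * (k : ℂ) ^ 2 + (α : ℂ) + s) / (ν : ℂ) ≠ 0 := by
    refine div_ne_zero (ne_zero_of_re_pos ?_) hν0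
    have h_re : ((ν : ℂ) * (k : ℂ) ^ 2 + (α : ℂ) + s).re = ν * k ^ 2 + α + s.re := by norm_cast
    rw [h_re]
    positivity
  exact mul_ne_zero (mul_ne_zero h_first (sub_ne_zero.mpr h_middle))
    (cpow_ne_zero_iff.mpr (Or.inl h_last_base))
end
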